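/- arXiv:2208.02097 — 4 statements merged into one kernel-verified Lean document; each statement's English description precedes it below -/
import Mathlib

section
/- For every m ≥ 3, β(P_m) ≥ 1/m^{m−2}, where β(P_m) is the supremum over all n and all probability measures μ on the edges of K_n of β(μ; P_m) = ∑_{copies P of P_m in K_n} ∏_{e ∈ E(P)} μ(e). -/
open Finset
open scoped Classical

/-- A (bounded, nonnegative) measure on the edges of the complete graph `K_n`,
given by a symmetric nonnegative weight function vanishing on the diagonal. -/
structure EdgeMeasure (n : ℕ) where
  w : Fin n → Fin n → ℝ
  symm : ∀ i j, w i j = w j i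
  diag : ∀ i, w i i = 0
  nonneg : ∀ i j, 0 ≤ w i j

/-- Total mass of an edge measure (each unordered edge counted once). -/
noncomputable def mass {n : ℕ} (μ : EdgeMeasure n) : ℝ :=
  (∑ i, ∑ j, μ.w i j) / 2

/-- Weighted degree `μ̄(v)` of a vertex. -/
noncomputable def mubar {n : ℕ} (μ : EdgeMeasure n) (v : Fin n) : ℝ :=
  ∑ u, μ.w v u

/-- The μ-weight of the path traced by a tuple of `m` vertices:
the product of the weights of its `m-1` consecutive edges. -/
noncomputable def pathWt {n m : ℕ} (μ : EdgeMeasure n) (x : Fin m → Fin n) : ℝ :=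
  ∏ i : Fin (m - 1),
    μ.w (x ⟨i.1, by have := i.2; omega⟩) (x ⟨i.1 + 1, by have := i.2; omega⟩)

/-- `β(μ; P_m)`: total μ-weight of the (unlabeled, non-induced) copies of the path
on `m` vertices in `K_n`; each unlabeled copy corresponds to exactly two injective
labeled tuples, whence the division by 2. -/
noncomputable def betaP {n : ℕ} (μ : EdgeMeasure n) (m : ℕ) : ℝ :=
  (∑ x ∈ univ.filter (fun x : Fin m → Fin n => Function.Injective x), pathWt μ x) / 2

/-- `β(P_m)`: the supremum of `β(μ; P_m)` over all `n` and all probability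
measures `μ` on the edges of `K_n`. -/
noncomputable def betaPathSup (m : ℕ) : ℝ :=
  sSup {r : ℝ | ∃ n : ℕ, ∃ μ : EdgeMeasure n, mass μ = 1 ∧ r = betaP μ m}

/-- `β*(μ; P_{(s,t)})` with the path of length `s` starting at vertex `vs` and the
path of length `t` starting at vertex `vt`: each copy of the disjoint union
`P_{s+1} ⊔ P_{t+1}` is recorded by a jointly injective pair of tuples. -/
noncomputable def betaStar {n : ℕ} (μ : EdgeMeasure n) (s t : ℕ) (vs vt : Fin n) : ℝ :=
  ∑ p ∈ univ.filter
      (fun p : (Fin (s + 1) → Fin n) × (Fin (t + 1) → Fin n) =>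
        Function.Injective (Sum.elim p.1 p.2) ∧ p.1 0 = vs ∧ p.2 0 = vt),
    pathWt μ p.1 * pathWt μ p.2

/-- `β*_{w,n}(P_{(s,t)})`: the supremum of `β*(μ; P_{(s,t)})` over all measures of
total mass `w` on the edges of `K_n`, the length-`s` path starting at vertex `n`
(index `n-1`) and the length-`t` path starting at vertex `1` (index `0`). -/
noncomputable def betaStarSupN (w : ℝ) (n s t : ℕ) : ℝ :=
  sSup {r : ℝ | ∃ μ : EdgeMeasure n, mass μ = w ∧
    ∃ h : 0 < n, r = betaStar μ s t ⟨n - 1, by omega⟩ ⟨0, h⟩}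

/-- `ρ(μ; m) = ∑_{x ∈ (n)_m} μ̄(x_1) (∏ μ(x_i,x_{i+1})) μ̄(x_m)`, the sum over
ordered tuples of `m` distinct vertices. -/
noncomputable def rho {n : ℕ} (μ : EdgeMeasure n) (m : ℕ) : ℝ :=
  if h : 0 < m then
    ∑ x ∈ univ.filter (fun x : Fin m → Fin n => Function.Injective x),
      mubar μ (x ⟨0, h⟩) * pathWt μ x * mubar μ (x ⟨m - 1, by omega⟩)
  else 0

/-- `ρ_n(m)`: supremum of `ρ(μ; m)` over probability measures on the edges of `K_n`. -/
noncomputable def rhoN (n m : ℕ) : ℝ :=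
  sSup {r : ℝ | ∃ μ : EdgeMeasure n, mass μ = 1 ∧ r = rho μ m}

/-- `ρ(m) = sup_n ρ_n(m)`. -/
noncomputable def rhoSup (m : ℕ) : ℝ :=
  sSup {r : ℝ | ∃ n : ℕ, r = rhoN n m}

/-- `μ` is the uniform probability measure on the edges of the cycle `C_m` on the
vertices `0, 1, …, m-1` of `K_n`: each cycle edge gets weight `1/m`. -/
def CycleUniform {n : ℕ} (μ : EdgeMeasure n) (m : ℕ) : Prop :=
  ∀ a b : Fin n, μ.w a b =
    (if a.1 < m ∧ b.1 < m ∧ b.1 = (a.1 + 1) % m then (1 : ℝ) / m else 0) +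
    (if a.1 < m ∧ b.1 < m ∧ a.1 = (b.1 + 1) % m then (1 : ℝ) / m else 0)

/-- `deg_P(v)`: the number of edges of the path traced by the tuple `p` that are
incident to the vertex `v`. -/
noncomputable def degTuple {n m : ℕ} (p : Fin m → Fin n) (v : Fin n) : ℕ :=
  ((univ : Finset (Fin (m - 1))).filter (fun i =>
      p ⟨i.1, by have := i.2; omega⟩ = v ∨ p ⟨i.1 + 1, by have := i.2; omega⟩ = v)).card


/-!
The uniform probability measure on the edges of the cycle `C_m` inside `K_m` already does it:
the `2m` directed Hamiltonian paths `i ↦ a ± i` of `C_m` are injective tuples of weight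
`m^{-(m-1)}` each, so `β(μ; P_m) ≥ 2m · m^{-(m-1)} / 2 = m^{-(m-2)}`. The supremum is finite
since a tuple is determined by its `m - 1` consecutive edges, whence
`β(μ; P_m) ≤ (2 · mass μ)^(m-1) / 2`.
-/

theorem pathWt_nonneg {n m : ℕ} (μ : EdgeMeasure n) (x : Fin m → Fin n) : 0 ≤ pathWt μ x :=
  prod_nonneg fun _ _ => μ.nonneg _ _

theorem pathWt_eq_pow {n m : ℕ} (μ : EdgeMeasure n) (x : Fin m → Fin n) {c : ℝ}
    (hx : ∀ i (hi : i + 1 < m), μ.w (x ⟨i, by omega⟩) (x ⟨i + 1, hi⟩) = c) :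
    pathWt μ x = c ^ (m - 1) := by
  unfold pathWt
  rw [prod_congr rfl fun i _ => hx i.1 (by omega), prod_const, card_univ, Fintype.card_fin]

theorem sum_pathWt_le_pow {n m : ℕ} (hm : 2 ≤ m) (μ : EdgeMeasure n) :
    ∑ x : Fin m → Fin n, pathWt μ x ≤ (∑ i, ∑ j, μ.w i j) ^ (m - 1) := by
  let edges : (Fin m → Fin n) → Fin (m - 1) → Fin n × Fin n :=
    fun x i => (x ⟨i.1, by omega⟩, x ⟨i.1 + 1, by omega⟩)
  have edges_injective : Function.Injective edges := by
    intro x y hxy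
    funext j
    by_cases hj : j.1 < m - 1
    · exact congrArg Prod.fst (congrFun hxy ⟨j.1, hj⟩)
    · have hlast : j = ⟨m - 2 + 1, by omega⟩ := Fin.ext (by simp; omega)
      rw [hlast]
      exact congrArg Prod.snd (congrFun hxy ⟨m - 2, by omega⟩)
  calc ∑ x : Fin m → Fin n, pathWt μ x
      = ∑ y ∈ univ.image edges, ∏ i, μ.w (y i).1 (y i).2 := by
        rw [sum_image fun x _ y _ h => edges_injective h]
        rfl
    _ ≤ ∑ y : Fin (m - 1) → Fin n × Fin n, ∏ i, μ.w (y i).1 (y i).2 :=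
        sum_le_sum_of_subset_of_nonneg (subset_univ _)
          fun _ _ _ => prod_nonneg fun _ _ => μ.nonneg _ _
    _ = (∑ i, ∑ j, μ.w i j) ^ (m - 1) := by
        rw [← Fintype.sum_prod_type', Fintype.sum_pow]

theorem betaP_le_pow {n m : ℕ} (hm : 2 ≤ m) (μ : EdgeMeasure n) :
    betaP μ m ≤ (2 * mass μ) ^ (m - 1) / 2 := by
  have htotal : 2 * mass μ = ∑ i, ∑ j, μ.w i j := by rw [mass]; ring
  rw [betaP, htotal]
  gcongr
  exact (sum_le_sum_of_subset_of_nonneg (filter_subset _ _)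
    fun x _ _ => pathWt_nonneg μ x).trans (sum_pathWt_le_pow hm μ)

theorem betaP_le_betaPathSup {n m : ℕ} (hm : 2 ≤ m) {μ : EdgeMeasure n} (hμ : mass μ = 1) :
    betaP μ m ≤ betaPathSup m :=
  le_csSup ⟨2 ^ (m - 1) / 2, by
    rintro r ⟨n, ν, hν, rfl⟩
    simpa [hν] using betaP_le_pow hm ν⟩ ⟨n, μ, hμ, rfl⟩

theorem Fin.one_add_one_ne_zero (k : ℕ) : (1 : Fin (k + 3)) + 1 ≠ 0 := by
  simp [Fin.ext_iff, Fin.val_add, Nat.mod_eq_of_lt (show 2 < k + 3 by omega)]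

theorem Fin.add_one_ne_sub_one {k : ℕ} (a : Fin (k + 3)) : a + 1 ≠ a - 1 := by
  intro h
  rw [sub_eq_add_neg, add_right_inj, eq_neg_iff_add_eq_zero] at h
  exact Fin.one_add_one_ne_zero k h

theorem Fin.ne_add_one_add_one {k : ℕ} (a : Fin (k + 3)) : a ≠ a + 1 + 1 := by
  intro h
  rw [add_assoc, left_eq_add] at h
  exact Fin.one_add_one_ne_zero k h

theorem Fin.mk_add_one_eq {n i : ℕ} [NeZero n] (hi : i + 1 < n) :
    (⟨i + 1, hi⟩ : Fin n) = ⟨i, by omega⟩ + 1 := by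
  ext
  rw [Fin.val_add_one_of_lt' (by simpa using hi)]

-- Indexed by `k = m - 3`, so that `Fin (k + 3)` is a cyclic group in which `i + 1 ≠ i - 1`.
noncomputable def cycleMeasure (k : ℕ) : EdgeMeasure (k + 3) where
  w i j := (if j = i + 1 then ((k : ℝ) + 3)⁻¹ else 0) + (if i = j + 1 then ((k : ℝ) + 3)⁻¹ else 0)
  symm _ _ := add_comm _ _
  diag i := by simp
  nonneg _ _ := by positivity

theorem cycleMeasure_w_add_one (k : ℕ) (i : Fin (k + 3)) :
    (cycleMeasure k).w i (i + 1) = ((k : ℝ) + 3)⁻¹ := by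
  simp [cycleMeasure, Fin.ne_add_one_add_one i]

theorem mass_cycleMeasure (k : ℕ) : mass (cycleMeasure k) = 1 := by
  have hrow (i : Fin (k + 3)) : ∑ j, (cycleMeasure k).w i j = 2 * ((k : ℝ) + 3)⁻¹ := by
    simp only [cycleMeasure, sum_add_distrib, eq_comm (a := i), ← eq_sub_iff_add_eq,
      sum_ite_eq', mem_univ, if_true]
    ring
  rw [mass, sum_congr rfl fun i _ => hrow i, sum_const, card_univ, Fintype.card_fin, nsmul_eq_mul]
  push_cast
  field_simp

def cyclePath (k : ℕ) (p : Fin (k + 3) × Bool) (i : Fin (k + 3)) : Fin (k + 3) :=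
  if p.2 then p.1 + i else p.1 - i

theorem cyclePath_injective (k : ℕ) (p : Fin (k + 3) × Bool) :
    Function.Injective (cyclePath k p) := by
  obtain ⟨a, _ | _⟩ := p
  · exact fun i j h => sub_right_injective (h : a - i = a - j)
  · exact fun i j h => add_right_injective a (h : a + i = a + j)

theorem injective_cyclePath (k : ℕ) : Function.Injective (cyclePath k) := by
  rintro ⟨a, b⟩ ⟨a', b'⟩ h
  obtain rfl : a = a' := by simpa [cyclePath] using congrFun h 0
  have h1 := congrFun h 1
  cases b <;> cases b' <;> simp only [cyclePath] at h1
  · rfl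
  · exact absurd h1.symm (Fin.add_one_ne_sub_one a)
  · exact absurd h1 (Fin.add_one_ne_sub_one a)
  · rfl

theorem pathWt_cyclePath (k : ℕ) (p : Fin (k + 3) × Bool) :
    pathWt (cycleMeasure k) (cyclePath k p) = ((k : ℝ) + 3)⁻¹ ^ (k + 2) := by
  refine pathWt_eq_pow _ _ fun i hi => ?_
  obtain ⟨a, _ | _⟩ := p
  · simp only [cyclePath, Fin.mk_add_one_eq hi, Bool.false_eq_true, if_false]
    rw [(cycleMeasure k).symm, ← cycleMeasure_w_add_one k (a - (⟨i, by omega⟩ + 1))]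
    congr 2
    abel
  · simp only [cyclePath, Fin.mk_add_one_eq hi, if_true, ← add_assoc]
    exact cycleMeasure_w_add_one k _

theorem one_div_pow_le_betaP_cycleMeasure (k : ℕ) :
    1 / ((k : ℝ) + 3) ^ (k + 1) ≤ betaP (cycleMeasure k) (k + 3) := by
  have hpaths : ∑ p, pathWt (cycleMeasure k) (cyclePath k p) =
      2 * ((k : ℝ) + 3) * ((k : ℝ) + 3)⁻¹ ^ (k + 2) := by
    simp only [pathWt_cyclePath, sum_const, card_univ, Fintype.card_prod, Fintype.card_fin,
      Fintype.card_bool, nsmul_eq_mul]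
    push_cast
    ring
  have hsubset : univ.image (cyclePath k) ⊆ univ.filter Function.Injective := by
    rintro _ hx
    obtain ⟨p, -, rfl⟩ := mem_image.mp hx
    exact mem_filter.mpr ⟨mem_univ _, cyclePath_injective k p⟩
  calc 1 / ((k : ℝ) + 3) ^ (k + 1)
      = (∑ p, pathWt (cycleMeasure k) (cyclePath k p)) / 2 := by
        rw [hpaths, inv_pow, pow_succ _ (k + 1)]
        field_simp
    _ = (∑ x ∈ univ.image (cyclePath k), pathWt (cycleMeasure k) x) / 2 := by
        rw [sum_image fun p _ q _ h => injective_cyclePath k h]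
    _ ≤ betaP (cycleMeasure k) (k + 3) := by
        rw [betaP]
        exact div_le_div_of_nonneg_right
          (sum_le_sum_of_subset_of_nonneg hsubset fun x _ _ => pathWt_nonneg _ x) zero_le_two

/-- For every `m ≥ 3`, `β(P_m) ≥ 1/m^(m-2)`. -/
theorem stmt3 (m : ℕ) (hm : 3 ≤ m) :
    1 / (m : ℝ) ^ (m - 2) ≤ betaPathSup m := by
  obtain ⟨k, rfl⟩ : ∃ k, m = k + 3 := ⟨m - 3, by omega⟩
  calc 1 / ((k + 3 : ℕ) : ℝ) ^ (k + 3 - 2)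
      = 1 / ((k : ℝ) + 3) ^ (k + 1) := by push_cast; rfl
    _ ≤ betaP (cycleMeasure k) (k + 3) := one_div_pow_le_betaP_cycleMeasure k
    _ ≤ betaPathSup (k + 3) := betaP_le_betaPathSup (by omega) (mass_cycleMeasure k)
end

section
/- For every integer m ≥ 2, β(P_m) ≤ 2e²/m^{m−2}, where β(P_m) is the supremum over all n and all probability measures μ on edges of K_n of the total μ-weight of copies of the path P_m in K_n. -/
open Finset
open scoped Classical

namespace Stmt9Aux

variable {n : ℕ}

lemma pathWt_nonneg {m : ℕ} (μ : EdgeMeasure n) (x : Fin m → Fin n) : 0 ≤ pathWt μ x :=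
  Finset.prod_nonneg fun _ _ => μ.nonneg _ _

lemma mubar_nonneg (μ : EdgeMeasure n) (v : Fin n) : 0 ≤ mubar μ v :=
  Finset.sum_nonneg fun _ _ => μ.nonneg _ _

lemma sum_mubar (μ : EdgeMeasure n) : ∑ v, mubar μ v = 2 * mass μ := by
  unfold mubar mass; ring

lemma col_sum (μ : EdgeMeasure n) (u : Fin n) : ∑ i, μ.w i u = mubar μ u := by
  unfold mubar; exact Finset.sum_congr rfl fun i _ => μ.symm i u

lemma mubar_le_mass (μ : EdgeMeasure n) (u : Fin n) : mubar μ u ≤ mass μ := by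
  have h1 : ∑ v, mubar μ v = 2 * mass μ := sum_mubar μ
  have h2 : mubar μ u + ∑ v ∈ univ.erase u, mubar μ v = ∑ v, mubar μ v :=
    Finset.add_sum_erase _ _ (mem_univ u)
  have h3 : ∑ v ∈ univ.erase u, μ.w v u ≤ ∑ v ∈ univ.erase u, mubar μ v :=
    Finset.sum_le_sum fun v _ =>
      Finset.single_le_sum (fun j _ => μ.nonneg v j) (mem_univ u)
  have h4 : ∑ v ∈ univ.erase u, μ.w v u = ∑ v, μ.w v u :=
    Finset.sum_erase _ (μ.diag u)
  have h5 : ∑ v, μ.w v u = mubar μ u := col_sum μ u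
  linarith

/-- the measure with all edges at `u` removed. -/
noncomputable def deleteVert (μ : EdgeMeasure n) (u : Fin n) : EdgeMeasure n where
  w i j := if i = u ∨ j = u then 0 else μ.w i j
  symm i j := by
    by_cases h : i = u ∨ j = u
    · rw [if_pos h, if_pos (Or.symm h)]
    · rw [if_neg h, if_neg (fun hc => h (Or.symm hc)), μ.symm]
  diag i := by by_cases h : i = u <;> simp [h, μ.diag]
  nonneg i j := by
    split
    · exact le_rfl
    · exact μ.nonneg i j

lemma sum_ite_eq_sub (u : Fin n) (g : Fin n → ℝ) :
    ∑ i, (if i = u then 0 else g i) = (∑ i, g i) - g u := by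
  have : ∀ i : Fin n, (if i = u then 0 else g i) = g i - (if i = u then g i else 0) := by
    intro i; by_cases h : i = u <;> simp [h]
  rw [Finset.sum_congr rfl fun i _ => this i, Finset.sum_sub_distrib,
    Finset.sum_ite_eq' univ u g, if_pos (mem_univ u)]

lemma mass_deleteVert (μ : EdgeMeasure n) (u : Fin n) :
    mass (deleteVert μ u) = mass μ - mubar μ u := by
  have hrow : ∀ i : Fin n, ∑ j, (deleteVert μ u).w i j
      = (if i = u then 0 else mubar μ i - μ.w i u) := by
    intro i
    by_cases h : i = u
    · simp [deleteVert, h]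
    · rw [if_neg h]
      have hentry : ∀ j : Fin n, (deleteVert μ u).w i j = (if j = u then 0 else μ.w i j) := by
        intro j; simp [deleteVert, h]
      rw [Finset.sum_congr rfl fun j _ => hentry j, sum_ite_eq_sub]
      rfl
  have hmu : ∑ i, mubar μ i = ∑ i, ∑ j, μ.w i j := rfl
  have hA : ∑ i, ∑ j, (deleteVert μ u).w i j
      = (∑ i, ∑ j, μ.w i j) - 2 * mubar μ u := by
    rw [Finset.sum_congr rfl fun i _ => hrow i, sum_ite_eq_sub, Finset.sum_sub_distrib,
      col_sum μ u, μ.diag u, ← hmu]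
    ring
  unfold mass
  rw [hA]
  ring

lemma pathWt_eq {k : ℕ} (μ : EdgeMeasure n) (x : Fin (k+1) → Fin n) :
    pathWt μ x = ∏ i : Fin k, μ.w (x i.castSucc) (x i.succ) := by
  unfold pathWt
  exact Finset.prod_congr rfl fun i _ => rfl

lemma pathWt_deleteVert {m : ℕ} (μ : EdgeMeasure n) (u : Fin n) (x : Fin m → Fin n)
    (hx : ∀ i, x i ≠ u) : pathWt (deleteVert μ u) x = pathWt μ x := by
  unfold pathWt
  refine Finset.prod_congr rfl fun i _ => ?_
  show (if _ = u ∨ _ = u then 0 else μ.w _ _) = _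
  rw [if_neg (by push_neg; exact ⟨hx _, hx _⟩)]

lemma pathWt_succ {k : ℕ} (μ : EdgeMeasure n) (y : Fin (k+2) → Fin n) :
    pathWt μ y = μ.w (y 0) (y 1) * pathWt μ (y ∘ Fin.succ) := by
  rw [pathWt_eq (k := k+1), pathWt_eq (k := k), Fin.prod_univ_succ,
    Fin.castSucc_zero, Fin.succ_zero_eq_one]
  congr 1

/-- sum over injective stubs of `k` edges rooted at `u`. -/
noncomputable def G (μ : EdgeMeasure n) (k : ℕ) (u : Fin n) : ℝ :=
  ∑ y ∈ univ.filter (fun y : Fin (k+1) → Fin n => Function.Injective y ∧ y 0 = u),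
    pathWt μ y

set_option maxHeartbeats 2000000 in
lemma peel (μ : EdgeMeasure n) (k : ℕ) (u : Fin n) :
    G μ (k+1) u ≤ ∑ z ∈ univ.filter (fun z : Fin (k+1) → Fin n => Function.Injective z),
      μ.w u (z 0) * pathWt (deleteVert μ u) z := by
  classical
  unfold G
  set s := univ.filter (fun y : Fin (k+1+1) → Fin n => Function.Injective y ∧ y 0 = u) with hs
  have hterm : ∀ y ∈ s,
      pathWt μ y = μ.w u ((y ∘ Fin.succ) 0) * pathWt (deleteVert μ u) (y ∘ Fin.succ) := by
    intro y hy
    rw [hs, Finset.mem_filter] at hy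
    obtain ⟨-, hyinj, hy0⟩ := hy
    have havoid : ∀ i : Fin (k+1), (y ∘ Fin.succ) i ≠ u := by
      intro i hc
      have : i.succ = (0 : Fin (k+2)) := hyinj (by rw [Function.comp_apply] at hc; rw [hc, hy0])
      exact (Fin.succ_ne_zero i) this
    have h01 : (y ∘ Fin.succ) 0 = y 1 := by
      rw [Function.comp_apply, Fin.succ_zero_eq_one]
    rw [pathWt_deleteVert μ u _ havoid, pathWt_succ, hy0, h01]
  have hφinj : ∀ y₁ ∈ s, ∀ y₂ ∈ s, y₁ ∘ Fin.succ = y₂ ∘ Fin.succ → y₁ = y₂ := by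
    intro y₁ h₁ y₂ h₂ h
    rw [hs, Finset.mem_filter] at h₁ h₂
    funext i
    induction i using Fin.cases with
    | zero => rw [h₁.2.2, h₂.2.2]
    | succ j => exact congrFun h j
  calc ∑ y ∈ s, pathWt μ y
      = ∑ y ∈ s, μ.w u ((y ∘ Fin.succ) 0) * pathWt (deleteVert μ u) (y ∘ Fin.succ) :=
        Finset.sum_congr rfl hterm
    _ = ∑ z ∈ s.image (fun y => y ∘ Fin.succ), μ.w u (z 0) * pathWt (deleteVert μ u) z :=
        (Finset.sum_image (f := fun z => μ.w u (z 0) * pathWt (deleteVert μ u) z) hφinj).symm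
    _ ≤ _ := by
        apply Finset.sum_le_sum_of_subset_of_nonneg
        · intro z hz
          rw [Finset.mem_image] at hz
          obtain ⟨y, hy, rfl⟩ := hz
          rw [hs, Finset.mem_filter] at hy
          exact Finset.mem_filter.2 ⟨mem_univ _, hy.2.1.comp (Fin.succ_injective _)⟩
        · intro z _ _
          exact mul_nonneg (μ.nonneg _ _) (pathWt_nonneg _ _)

lemma amgm (k : ℕ) (w α : ℝ) (h0 : 0 ≤ α) (h1 : α ≤ w) :
    α * ((w - α) / (k : ℝ)) ^ k ≤ (w / ((k : ℝ) + 1)) ^ (k + 1) := by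
  rcases Nat.eq_zero_or_pos k with hk | hk
  · subst hk
    simpa using h1
  · have hk' : (0:ℝ) < k := by exact_mod_cast hk
    have hk1 : (0:ℝ) < (k : ℝ) + 1 := by linarith
    set p₂ := (w - α) / (k : ℝ) with hp₂def
    have hp₂ : 0 ≤ p₂ := div_nonneg (by linarith) hk'.le
    have hw : 1 / ((k:ℝ)+1) + (k:ℝ) / ((k:ℝ)+1) = 1 := by
      field_simp
      ring
    have key := Real.geom_mean_le_arith_mean2_weighted
      (by positivity) (by positivity) h0 hp₂ hw
    have hrhs : 1 / ((k:ℝ)+1) * α + (k:ℝ) / ((k:ℝ)+1) * p₂ = w / ((k:ℝ)+1) := by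
      rw [hp₂def]; field_simp; ring
    rw [hrhs] at key
    have h3 := pow_le_pow_left₀ (by positivity) key (k + 1)
    calc α * p₂ ^ k
        = (α ^ (1 / ((k:ℝ)+1)) * p₂ ^ ((k:ℝ) / ((k:ℝ)+1))) ^ (k+1) := by
          rw [mul_pow, ← Real.rpow_natCast (α ^ (1 / ((k:ℝ)+1))) (k+1),
            ← Real.rpow_natCast (p₂ ^ ((k:ℝ) / ((k:ℝ)+1))) (k+1),
            ← Real.rpow_mul h0, ← Real.rpow_mul hp₂]
          push_cast
          rw [div_mul_cancel₀ 1 hk1.ne', div_mul_cancel₀ (k:ℝ) hk1.ne',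
            Real.rpow_one, Real.rpow_natCast]
      _ ≤ (w / ((k:ℝ)+1)) ^ (k+1) := h3

set_option maxHeartbeats 2000000 in
lemma Gbound : ∀ (k : ℕ) {n : ℕ} (μ : EdgeMeasure n) (u : Fin n),
    G μ k u ≤ (mass μ / (k : ℝ)) ^ k := by
  intro k
  induction k with
  | zero =>
    intro n μ u
    have hsub : univ.filter
        (fun y : Fin 1 → Fin n => Function.Injective y ∧ y 0 = u) ⊆ {fun _ => u} := by
      intro y hy
      rw [Finset.mem_filter] at hy
      rw [Finset.mem_singleton]
      funext i
      rw [Subsingleton.elim i 0, hy.2.2]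
    have h1 : ∑ y ∈ univ.filter
          (fun y : Fin 1 → Fin n => Function.Injective y ∧ y 0 = u), pathWt μ y
        ≤ ∑ y ∈ ({fun _ => u} : Finset (Fin 1 → Fin n)), pathWt μ y :=
      Finset.sum_le_sum_of_subset_of_nonneg hsub (fun y _ _ => pathWt_nonneg μ y)
    rw [Finset.sum_singleton] at h1
    have h2 : pathWt μ (fun _ : Fin 1 => u) = 1 := by
      rw [pathWt_eq (k := 0)]
      simp
    rw [h2] at h1
    unfold G
    simpa using h1
  | succ k ih =>
    intro n μ u
    have hpeel := peel μ k u
    set μ' := deleteVert μ u with hμ'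
    have hfib : ∑ z ∈ univ.filter (fun z : Fin (k+1) → Fin n => Function.Injective z),
        μ.w u (z 0) * pathWt μ' z = ∑ x : Fin n, μ.w u x * G μ' k x := by
      rw [← Finset.sum_fiberwise_of_maps_to
        (fun (z : Fin (k+1) → Fin n) _ => mem_univ (z 0))
        (fun z => μ.w u (z 0) * pathWt μ' z)]
      refine Finset.sum_congr rfl fun x _ => ?_
      rw [Finset.filter_filter]
      unfold G
      rw [Finset.mul_sum]
      refine Finset.sum_congr rfl fun z hz => ?_
      rw [Finset.mem_filter] at hz
      rw [hz.2.2]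
    have hIH : ∀ x : Fin n, μ.w u x * G μ' k x
        ≤ μ.w u x * ((mass μ' / (k : ℝ)) ^ k) := fun x =>
      mul_le_mul_of_nonneg_left (ih μ' x) (μ.nonneg u x)
    have hsum : ∑ x : Fin n, μ.w u x * ((mass μ' / (k : ℝ)) ^ k)
        = mubar μ u * ((mass μ' / (k : ℝ)) ^ k) := by
      rw [← Finset.sum_mul]
      rfl
    have hmass' : mass μ' = mass μ - mubar μ u := mass_deleteVert μ u
    have hfinal : mubar μ u * (((mass μ - mubar μ u) / (k : ℝ)) ^ k)
        ≤ (mass μ / ((k : ℝ) + 1)) ^ (k + 1) :=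
      amgm k (mass μ) (mubar μ u) (mubar_nonneg μ u) (mubar_le_mass μ u)
    calc G μ (k+1) u
        ≤ ∑ x : Fin n, μ.w u x * G μ' k x := hpeel.trans_eq hfib
      _ ≤ ∑ x : Fin n, μ.w u x * ((mass μ' / (k : ℝ)) ^ k) :=
          Finset.sum_le_sum fun x _ => hIH x
      _ = mubar μ u * ((mass μ' / (k : ℝ)) ^ k) := hsum
      _ ≤ (mass μ / ((k : ℝ) + 1)) ^ (k + 1) := by rw [hmass']; exact hfinal
      _ = (mass μ / ((k+1 : ℕ) : ℝ)) ^ (k + 1) := by push_cast; ring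

set_option maxHeartbeats 2000000 in
lemma main' (k : ℕ) {n : ℕ} (μ : EdgeMeasure n) (hμ : mass μ = 1) :
    betaP μ (k+2) ≤ ((1 : ℝ) / (k : ℝ)) ^ k := by
  classical
  set t := univ.filter (fun z : Fin (k+1) → Fin n => Function.Injective z) with ht
  have stepA : ∑ x ∈ univ.filter (fun x : Fin (k+2) → Fin n => Function.Injective x),
      pathWt μ x ≤ ∑ z ∈ t, mubar μ (z 0) * pathWt μ z := by
    set s := univ.filter (fun x : Fin (k+2) → Fin n => Function.Injective x) with hsdef
    have hφinj : ∀ y₁ ∈ s, ∀ y₂ ∈ s,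
        (fun y : Fin (k+2) → Fin n => ((y 0, y ∘ Fin.succ) : Fin n × (Fin (k+1) → Fin n))) y₁ =
        (fun y : Fin (k+2) → Fin n => ((y 0, y ∘ Fin.succ) : Fin n × (Fin (k+1) → Fin n))) y₂ →
        y₁ = y₂ := by
      intro y₁ _ y₂ _ h
      simp only [Prod.mk.injEq] at h
      funext i
      induction i using Fin.cases with
      | zero => exact h.1
      | succ j => exact congrFun h.2 j
    have hterm : ∀ y ∈ s, pathWt μ y
        = μ.w (y 0) ((y ∘ Fin.succ) 0) * pathWt μ (y ∘ Fin.succ) := by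
      intro y _
      have h01 : (y ∘ Fin.succ) 0 = y 1 := by
        rw [Function.comp_apply, Fin.succ_zero_eq_one]
      rw [pathWt_succ, h01]
    calc ∑ y ∈ s, pathWt μ y
        = ∑ y ∈ s, μ.w (y 0) ((y ∘ Fin.succ) 0) * pathWt μ (y ∘ Fin.succ) :=
          Finset.sum_congr rfl hterm
      _ = ∑ p ∈ s.image (fun y => ((y 0, y ∘ Fin.succ) : Fin n × (Fin (k+1) → Fin n))),
            μ.w p.1 (p.2 0) * pathWt μ p.2 :=
          (Finset.sum_image
            (f := fun p : Fin n × (Fin (k+1) → Fin n) => μ.w p.1 (p.2 0) * pathWt μ p.2)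
            hφinj).symm
      _ ≤ ∑ p ∈ (univ : Finset (Fin n)) ×ˢ t, μ.w p.1 (p.2 0) * pathWt μ p.2 := by
          apply Finset.sum_le_sum_of_subset_of_nonneg
          · intro p hp
            rw [Finset.mem_image] at hp
            obtain ⟨y, hy, rfl⟩ := hp
            rw [hsdef, Finset.mem_filter] at hy
            refine Finset.mem_product.2 ⟨mem_univ _, ?_⟩
            rw [ht]
            exact Finset.mem_filter.2 ⟨mem_univ _, hy.2.comp (Fin.succ_injective _)⟩
          · intro p _ _
            exact mul_nonneg (μ.nonneg _ _) (pathWt_nonneg _ _)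
      _ = ∑ z ∈ t, mubar μ (z 0) * pathWt μ z := by
          rw [Finset.sum_product, Finset.sum_comm]
          refine Finset.sum_congr rfl fun z _ => ?_
          dsimp only
          rw [← Finset.sum_mul, col_sum]
  have stepB : ∑ z ∈ t, mubar μ (z 0) * pathWt μ z = ∑ x : Fin n, mubar μ x * G μ k x := by
    rw [ht, ← Finset.sum_fiberwise_of_maps_to
      (fun (z : Fin (k+1) → Fin n) _ => mem_univ (z 0))
      (fun z => mubar μ (z 0) * pathWt μ z)]
    refine Finset.sum_congr rfl fun x _ => ?_
    rw [Finset.filter_filter]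
    unfold G
    rw [Finset.mul_sum]
    refine Finset.sum_congr rfl fun z hz => ?_
    rw [Finset.mem_filter] at hz
    rw [hz.2.2]
  have stepC : ∑ x : Fin n, mubar μ x * G μ k x
      ≤ ∑ x : Fin n, mubar μ x * ((mass μ / (k : ℝ)) ^ k) :=
    Finset.sum_le_sum fun x _ =>
      mul_le_mul_of_nonneg_left (Gbound k μ x) (mubar_nonneg μ x)
  have stepD : ∑ x : Fin n, mubar μ x * ((mass μ / (k : ℝ)) ^ k)
      = 2 * ((1 : ℝ) / (k : ℝ)) ^ k := by
    rw [← Finset.sum_mul, sum_mubar, hμ]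
    ring
  unfold betaP
  have := (stepA.trans_eq stepB).trans (stepC.trans_eq stepD)
  linarith

lemma numeric (k : ℕ) : ((1 : ℝ) / (k : ℝ)) ^ k
    ≤ 2 * Real.exp 2 / ((k : ℝ) + 2) ^ k := by
  have hexp1 : (1 : ℝ) ≤ Real.exp 2 := by
    have := Real.add_one_le_exp (2:ℝ); linarith
  rcases Nat.eq_zero_or_pos k with hk | hk
  · subst hk
    have h0 : (1:ℝ) ≤ 2 * Real.exp 2 := by linarith
    simpa using h0
  · have hk' : (0:ℝ) < k := by exact_mod_cast hk
    have hk2 : (0:ℝ) < (k:ℝ) + 2 := by linarith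
    rw [le_div_iff₀ (by positivity)]
    have h1 : ((1:ℝ)/(k:ℝ))^k * ((k:ℝ)+2)^k = (((k:ℝ)+2)/(k:ℝ))^k := by
      rw [← mul_pow]
      congr 1
      field_simp
    rw [h1]
    have h2 : ((k:ℝ)+2)/(k:ℝ) = 1 + 2/(k:ℝ) := by field_simp
    have h3 : (1 : ℝ) + 2/(k:ℝ) ≤ Real.exp (2/(k:ℝ)) := by
      have := Real.add_one_le_exp (2/(k:ℝ)); linarith
    have h6 : (k:ℝ) * (2/(k:ℝ)) = 2 := by field_simp
    have h7 : (((k:ℝ)+2)/(k:ℝ))^k ≤ Real.exp 2 := by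
      calc (((k:ℝ)+2)/(k:ℝ))^k ≤ (Real.exp (2/(k:ℝ)))^k := by
            rw [h2]; exact pow_le_pow_left₀ (by positivity) h3 k
        _ = Real.exp ((k:ℝ) * (2/(k:ℝ))) := by rw [Real.exp_nat_mul]
        _ = Real.exp 2 := by rw [h6]
    linarith [Real.exp_pos 2]

end Stmt9Aux

/-- Lemma 2.2: for every `m ≥ 2`, `β(P_m) ≤ 2e²/m^(m-2)`. -/
theorem stmt9 (m : ℕ) (hm : 2 ≤ m) :
    betaPathSup m ≤ 2 * Real.exp 2 / (m : ℝ) ^ (m - 2) := by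
  have hR : 0 ≤ 2 * Real.exp 2 / (m : ℝ) ^ (m - 2) := by positivity
  apply Real.sSup_le _ hR
  rintro r ⟨n, μ, hmass, rfl⟩
  obtain ⟨k, rfl⟩ : ∃ k, m = k + 2 := ⟨m - 2, by omega⟩
  have h1 : betaP μ (k+2) ≤ ((1 : ℝ) / (k : ℝ)) ^ k := Stmt9Aux.main' k μ hmass
  have h2 := Stmt9Aux.numeric k
  have h3 : ((k + 2 : ℕ) : ℝ) ^ (k + 2 - 2) = ((k : ℝ) + 2) ^ k := by
    push_cast
    norm_num
  rw [h3]
  linarith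
end

section
/- Let n ≥ m ≥ 2 and let μ be a probability measure on the edges of K_n maximizing β(μ; P_m) among all probability measures on edges of K_n. Then for every vertex x ∈ [n]: μ̄(x) · (m−1) · β(μ; P_m) = ∑_{P copy of P_m containing x} deg_P(x) · μ(P), where μ̄(x) = ∑_{y≠x} μ(x,y) and μ(P) = ∏_{e∈E(P)} μ(e). -/
open Finset
open scoped Classical

/-!
Scale the weights of all edges at `x` by `1 + t` and renormalise by `1 + t μ̄(x)` to stay a
probability measure. A path `P` picks up the factor `(1 + t)^{deg_P(x)}`, and the normalisation
divides by `(1 + t μ̄(x))^{m-1}`, so `β` of the perturbed measure is a quotient of two smooth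
functions of `t`. Optimality of `μ` makes `t = 0` a local maximum of this quotient; equating its
derivative at `0` to zero is exactly the claimed identity.
-/

namespace EdgeMeasure

variable {n : ℕ}

noncomputable def reweightAt (μ : EdgeMeasure n) (x : Fin n) (t c : ℝ)
    (ht : 0 ≤ 1 + t) (hc : 0 < c) : EdgeMeasure n where
  w i j := (if i = x ∨ j = x then 1 + t else 1) * μ.w i j / c
  symm i j := by simp only [μ.symm i j, or_comm]
  diag i := by simp [μ.diag]
  nonneg i j := by
    apply div_nonneg _ hc.le
    apply mul_nonneg _ (μ.nonneg i j)
    split_ifs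
    exacts [ht, zero_le_one]

variable (μ : EdgeMeasure n) (x : Fin n) (t c : ℝ) (ht : 0 ≤ 1 + t) (hc : 0 < c)

lemma mubar_eq_sum_w_left : mubar μ x = ∑ i, μ.w i x :=
  Finset.sum_congr rfl fun i _ => μ.symm x i

lemma mass_reweightAt :
    mass (μ.reweightAt x t c ht hc) = (mass μ + t * mubar μ x) / c := by
  -- the loop `x x` has weight `0`, so each edge at `x` is counted once from each endpoint
  have split_weight : ∀ i j : Fin n, (if i = x ∨ j = x then 1 + t else 1) * μ.w i j
      = μ.w i j + t * (if i = x then μ.w i j else 0) + t * (if j = x then μ.w i j else 0) := by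
    intro i j
    by_cases hi : i = x <;> by_cases hj : j = x <;> simp [hi, hj, μ.diag] <;> ring
  simp only [mass, reweightAt, ← Finset.sum_div, split_weight, Finset.sum_add_distrib,
    ← Finset.mul_sum, Finset.sum_ite_irrel, Finset.sum_const_zero, Finset.sum_ite_eq',
    mem_univ, if_true]
  rw [← mubar, ← mubar_eq_sum_w_left]
  ring

lemma pathWt_reweightAt {m : ℕ} (p : Fin m → Fin n) :
    pathWt (μ.reweightAt x t c ht hc) p
      = (1 + t) ^ degTuple p x * pathWt μ p / c ^ (m - 1) := by
  simp only [pathWt, reweightAt, degTuple, Finset.prod_div_distrib, Finset.prod_mul_distrib,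
    Finset.prod_ite, Finset.prod_const, one_pow, mul_one, Finset.card_univ, Fintype.card_fin]

lemma betaP_reweightAt (m : ℕ) :
    betaP (μ.reweightAt x t c ht hc) m
      = (∑ p ∈ univ.filter (fun p : Fin m → Fin n => Function.Injective p),
          (1 + t) ^ degTuple p x * pathWt μ p) / 2 / c ^ (m - 1) := by
  simp only [betaP, pathWt_reweightAt, ← Finset.sum_div]
  ring

end EdgeMeasure

lemma hasDerivAt_sum_one_add_pow_mul {ι : Type*} (s : Finset ι) (d : ι → ℕ) (a : ι → ℝ) :
    HasDerivAt (fun t : ℝ => ∑ i ∈ s, (1 + t) ^ d i * a i) (∑ i ∈ s, (d i : ℝ) * a i) 0 := by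
  apply HasDerivAt.fun_sum
  intro i _
  simpa using (((hasDerivAt_id (0 : ℝ)).const_add 1).fun_pow (d i)).mul_const (a i)

lemma IsLocalMax.deriv_mul_eq_mul_of_div {g h : ℝ → ℝ} {g' h' a : ℝ}
    (hmax : IsLocalMax (fun t => g t / h t) a) (hg : HasDerivAt g g' a) (hh : HasDerivAt h h' a)
    (ha : h a ≠ 0) : g' * h a = g a * h' := by
  have hquot := hmax.hasDerivAt_eq_zero (hg.div hh ha)
  field_simp at hquot
  linarith

lemma isLocalMax_betaP_reweightAt {n m : ℕ} (μ : EdgeMeasure n) (hmass : mass μ = 1)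
    (hopt : ∀ η : EdgeMeasure n, mass η = 1 → betaP η m ≤ betaP μ m) (x : Fin n) :
    IsLocalMax (fun t : ℝ =>
        (∑ p ∈ univ.filter (fun p : Fin m → Fin n => Function.Injective p),
          (1 + t) ^ degTuple p x * pathWt μ p) / 2 / (1 + t * mubar μ x) ^ (m - 1)) 0 := by
  have near_zero : ∀ᶠ t : ℝ in nhds 0, 0 < 1 + t ∧ 0 < 1 + t * mubar μ x := by
    have h1 : ContinuousAt (fun t : ℝ => 1 + t) 0 := by fun_prop
    have h2 : ContinuousAt (fun t : ℝ => 1 + t * mubar μ x) 0 := by fun_prop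
    exact (h1.eventually (eventually_gt_nhds (by norm_num))).and
      (h2.eventually (eventually_gt_nhds (by norm_num)))
  filter_upwards [near_zero] with t ⟨ht, hc⟩
  calc _ = betaP (μ.reweightAt x t _ ht.le hc) m := (μ.betaP_reweightAt x t _ ht.le hc m).symm
    _ ≤ betaP μ m := hopt _ (by rw [EdgeMeasure.mass_reweightAt, hmass, div_self hc.ne'])
    _ = _ := by simp [betaP]

theorem stmt10_general (n m : ℕ) (hm : 2 ≤ m) (μ : EdgeMeasure n)
    (hmass : mass μ = 1)
    (hopt : ∀ η : EdgeMeasure n, mass η = 1 → betaP η m ≤ betaP μ m)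
    (x : Fin n) :
    mubar μ x * ((m : ℝ) - 1) * betaP μ m =
      (∑ p ∈ univ.filter (fun p : Fin m → Fin n => Function.Injective p),
          (degTuple p x : ℝ) * pathWt μ p) / 2 := by
  have hnum := (hasDerivAt_sum_one_add_pow_mul
    (univ.filter (fun p : Fin m → Fin n => Function.Injective p))
    (degTuple · x) (pathWt μ)).div_const 2
  have hden : HasDerivAt (fun t : ℝ => (1 + t * mubar μ x) ^ (m - 1))
      (((m - 1 : ℕ) : ℝ) * mubar μ x) 0 := by
    simpa using (((hasDerivAt_id (0 : ℝ)).mul_const (mubar μ x)).const_add 1).fun_pow (m - 1)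
  have key := (isLocalMax_betaP_reweightAt μ hmass hopt x).deriv_mul_eq_mul_of_div hnum hden
    (by simp)
  rw [Nat.cast_sub (by omega : 1 ≤ m)] at key
  simp only [add_zero, one_pow, one_mul, mul_one, zero_mul, Nat.cast_one] at key
  rw [key, betaP]
  ring

/-- Lemma 2.8 (Cox–Martin): for an optimal probability measure `μ` for `β(·; P_m)`
on `K_n` and any vertex `x`,
`μ̄(x)·(m-1)·β(μ;P_m) = ∑_{P ∋ x} deg_P(x)·μ(P)` (the sum over unlabeled copies;
each copy corresponds to two labeled tuples, and `deg_P(x) = 0` when `x ∉ P`). -/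
theorem stmt10 (n m : ℕ) (hm : 2 ≤ m) (hmn : m ≤ n) (μ : EdgeMeasure n)
    (hmass : mass μ = 1)
    (hopt : ∀ η : EdgeMeasure n, mass η = 1 → betaP η m ≤ betaP μ m)
    (x : Fin n) :
    mubar μ x * ((m : ℝ) - 1) * betaP μ m =
      (∑ p ∈ univ.filter (fun p : Fin m → Fin n => Function.Injective p),
          (degTuple p x : ℝ) * pathWt μ p) / 2 :=
  stmt10_general n m hm μ hmass hopt x
end

section
/- For all integers n ≥ m ≥ 2, ρ_n(m) ≤ (1152/m²) · β(P_m). -/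
open Finset
open scoped Classical

section AuxBasic

variable {n : ℕ}

lemma aux_sum_w (μ : EdgeMeasure n) (h : mass μ = 1) : ∑ i, ∑ j, μ.w i j = 2 := by
  have := h
  rw [mass] at this
  linarith

lemma aux_mubar_nonneg (μ : EdgeMeasure n) (v : Fin n) : 0 ≤ mubar μ v :=
  Finset.sum_nonneg fun u _ => μ.nonneg v u

lemma aux_col_eq (μ : EdgeMeasure n) (v : Fin n) : ∑ u, μ.w u v = mubar μ v := by
  rw [mubar]
  exact Finset.sum_congr rfl fun u _ => μ.symm u v

lemma aux_mubar_le (μ : EdgeMeasure n) (h : mass μ = 1) (v : Fin n) : mubar μ v ≤ 2 := by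
  rw [← aux_sum_w μ h]
  have h1 : mubar μ v ≤ ∑ i, mubar μ i := by
    apply Finset.single_le_sum (fun i _ => aux_mubar_nonneg μ i) (Finset.mem_univ v)
  calc mubar μ v ≤ ∑ i, mubar μ i := h1
    _ = ∑ i, ∑ j, μ.w i j := rfl

lemma aux_pathWt_nonneg {m : ℕ} (μ : EdgeMeasure n) (x : Fin m → Fin n) : 0 ≤ pathWt μ x :=
  Finset.prod_nonneg fun i _ => μ.nonneg _ _

lemma aux_betaP_nonneg (μ : EdgeMeasure n) (m : ℕ) : 0 ≤ betaP μ m := by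
  rw [betaP]
  apply div_nonneg _ (by norm_num)
  exact Finset.sum_nonneg fun x _ => aux_pathWt_nonneg μ x

end AuxBasic
section AuxWalk

variable {n : ℕ}

lemma aux_walk (μ : EdgeMeasure n) (h : mass μ = 1) :
    ∀ k : ℕ, (∑ x : Fin (k + 2) → Fin n, ∏ i : Fin (k + 1),
      μ.w (x i.castSucc) (x i.succ)) ≤ 2 ^ (k + 1) := by
  intro k
  induction k with
  | zero =>
    have e : (∑ x : Fin 2 → Fin n, ∏ i : Fin 1, μ.w (x i.castSucc) (x i.succ))
        = ∑ p : Fin n × Fin n, μ.w p.1 p.2 := by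
      apply Fintype.sum_equiv (piFinTwoEquiv fun _ => Fin n)
      intro x
      rw [Fin.prod_univ_one]
      rfl
    rw [e, Fintype.sum_prod_type]
    rw [aux_sum_w μ h]
    norm_num
  | succ k ih =>
    have e : (∑ p : Fin n × (Fin (k + 2) → Fin n),
            μ.w p.1 (p.2 0) * ∏ i : Fin (k + 1), μ.w (p.2 i.castSucc) (p.2 i.succ))
        = ∑ x : Fin (k + 3) → Fin n, ∏ i : Fin (k + 2), μ.w (x i.castSucc) (x i.succ) := by
      apply Fintype.sum_equiv (Fin.consEquiv (fun _ : Fin (k + 3) => Fin n))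
      intro p
      simp only [Fin.consEquiv_apply]
      show μ.w p.1 (p.2 0) * ∏ i : Fin (k + 1), μ.w (p.2 i.castSucc) (p.2 i.succ)
          = ∏ i : Fin (k + 2), μ.w ((Fin.cons p.1 p.2 : ∀ _ : Fin (k + 3), Fin n) i.castSucc)
              ((Fin.cons p.1 p.2 : ∀ _ : Fin (k + 3), Fin n) i.succ)
      conv_rhs => rw [Fin.prod_univ_succ]
      congr 1
    rw [← e, Fintype.sum_prod_type]
    rw [Finset.sum_comm]
    have hb : ∀ y : Fin (k + 2) → Fin n,
        (∑ a : Fin n, μ.w a (y 0) * ∏ i : Fin (k + 1), μ.w (y i.castSucc) (y i.succ))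
          ≤ 2 * ∏ i : Fin (k + 1), μ.w (y i.castSucc) (y i.succ) := by
      intro y
      rw [← Finset.sum_mul]
      have h1 : (∑ a : Fin n, μ.w a (y 0)) ≤ 2 := by
        rw [aux_col_eq]; exact aux_mubar_le μ h (y 0)
      exact mul_le_mul_of_nonneg_right h1 (Finset.prod_nonneg fun i _ => μ.nonneg _ _)
    calc (∑ y : Fin (k + 2) → Fin n, ∑ a : Fin n,
            μ.w a (y 0) * ∏ i : Fin (k + 1), μ.w (y i.castSucc) (y i.succ))
        ≤ ∑ y : Fin (k + 2) → Fin n, 2 * ∏ i : Fin (k + 1), μ.w (y i.castSucc) (y i.succ) :=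
          Finset.sum_le_sum fun y _ => hb y
      _ = 2 * ∑ y : Fin (k + 2) → Fin n, ∏ i : Fin (k + 1), μ.w (y i.castSucc) (y i.succ) := by
          rw [Finset.mul_sum]
      _ ≤ 2 * 2 ^ (k + 1) := by linarith [ih]
      _ = 2 ^ (k + 2) := by ring

lemma aux_pathWt_eq {k : ℕ} (μ : EdgeMeasure n) (x : Fin (k + 2) → Fin n) :
    pathWt μ x = ∏ i : Fin (k + 1), μ.w (x i.castSucc) (x i.succ) := rfl

lemma aux_betaP_le (μ : EdgeMeasure n) (h : mass μ = 1) (k : ℕ) :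
    betaP μ (k + 2) ≤ 2 ^ (k + 1) := by
  have h1 : (∑ x ∈ Finset.univ.filter
        (fun x : Fin (k + 2) → Fin n => Function.Injective x), pathWt μ x)
      ≤ ∑ x : Fin (k + 2) → Fin n, pathWt μ x := by
    apply Finset.sum_le_sum_of_subset_of_nonneg (Finset.filter_subset _ _)
    intro x _ _
    exact aux_pathWt_nonneg μ x
  have h2 : (∑ x : Fin (k + 2) → Fin n, pathWt μ x) ≤ 2 ^ (k + 1) := by
    calc (∑ x : Fin (k + 2) → Fin n, pathWt μ x)
        = ∑ x : Fin (k + 2) → Fin n, ∏ i : Fin (k + 1), μ.w (x i.castSucc) (x i.succ) :=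
          Finset.sum_congr rfl fun x _ => aux_pathWt_eq μ x
      _ ≤ 2 ^ (k + 1) := aux_walk μ h k
  have h3 : (0:ℝ) ≤ 2 ^ (k + 1) := by positivity
  rw [betaP, div_le_iff₀ (by norm_num : (0:ℝ) < 2)]
  calc (∑ x ∈ Finset.univ.filter
        (fun x : Fin (k + 2) → Fin n => Function.Injective x), pathWt μ x)
      ≤ 2 ^ (k + 1) := le_trans h1 h2
    _ ≤ 2 ^ (k + 1) * 2 := by linarith

end AuxWalk
section AuxSup

/-- A concrete probability measure on `K_n` (n ≥ 2): unit mass on the edge `{0,1}`. -/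
noncomputable def edgeUnit (n : ℕ) (hn : 2 ≤ n) : EdgeMeasure n where
  w := fun i j =>
    (if i = (⟨0, by omega⟩ : Fin n) ∧ j = (⟨1, by omega⟩ : Fin n) then (1:ℝ) else 0) +
    (if i = (⟨1, by omega⟩ : Fin n) ∧ j = (⟨0, by omega⟩ : Fin n) then (1:ℝ) else 0)
  symm := by
    intro i j
    by_cases h1 : i = (⟨0, by omega⟩ : Fin n) <;>
      by_cases h2 : j = (⟨1, by omega⟩ : Fin n) <;>
      by_cases h3 : i = (⟨1, by omega⟩ : Fin n) <;>
      by_cases h4 : j = (⟨0, by omega⟩ : Fin n) <;>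
      simp [h1, h2, h3, h4]
  diag := by
    intro i
    have hne : (⟨0, by omega⟩ : Fin n) ≠ (⟨1, by omega⟩ : Fin n) := by
      intro h
      have := congrArg Fin.val h
      simp at this
    have h1 : ¬(i = (⟨0, by omega⟩ : Fin n) ∧ i = (⟨1, by omega⟩ : Fin n)) := by
      rintro ⟨ha, hb⟩; exact hne (ha ▸ hb ▸ rfl)
    have h2 : ¬(i = (⟨1, by omega⟩ : Fin n) ∧ i = (⟨0, by omega⟩ : Fin n)) := by
      rintro ⟨ha, hb⟩; exact hne (hb ▸ ha ▸ rfl)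
    simp [h1, h2]
  nonneg := by
    intro i j
    have : ∀ p : Prop, ∀ _ : Decidable p, (0:ℝ) ≤ if p then 1 else 0 := by
      intro p hp; split <;> norm_num
    exact add_nonneg (this _ _) (this _ _)

lemma edgeUnit_mass (n : ℕ) (hn : 2 ≤ n) : mass (edgeUnit n hn) = 1 := by
  rw [mass]
  have key : ∀ (a b : Fin n),
      (∑ i, ∑ j, if i = a ∧ j = b then (1:ℝ) else 0) = 1 := by
    intro a b
    have h1 : ∀ i : Fin n, (∑ j, if i = a ∧ j = b then (1:ℝ) else 0)
        = if i = a then 1 else 0 := by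
      intro i
      by_cases hi : i = a
      · simp [hi, Finset.sum_ite_eq']
      · simp [hi]
    rw [Finset.sum_congr rfl fun i _ => h1 i]
    simp [Finset.sum_ite_eq']
  have : (∑ i, ∑ j, (edgeUnit n hn).w i j)
      = (∑ i, ∑ j, if i = (⟨0, by omega⟩ : Fin n) ∧ j = (⟨1, by omega⟩ : Fin n)
          then (1:ℝ) else 0)
      + (∑ i, ∑ j, if i = (⟨1, by omega⟩ : Fin n) ∧ j = (⟨0, by omega⟩ : Fin n)
          then (1:ℝ) else 0) := by
    rw [← Finset.sum_add_distrib]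
    apply Finset.sum_congr rfl
    intro i _
    rw [← Finset.sum_add_distrib]
    rfl
  rw [this, key, key]
  norm_num

lemma aux_bddAbove (m : ℕ) (hm : 2 ≤ m) :
    BddAbove {r : ℝ | ∃ n : ℕ, ∃ μ : EdgeMeasure n, mass μ = 1 ∧ r = betaP μ m} := by
  obtain ⟨k, rfl⟩ : ∃ k, m = k + 2 := ⟨m - 2, by omega⟩
  refine ⟨2 ^ (k + 1), ?_⟩
  rintro r ⟨n, μ, h1, rfl⟩
  exact aux_betaP_le μ h1 k

lemma aux_betaPathSup_nonneg (m : ℕ) (hm : 2 ≤ m) : 0 ≤ betaPathSup m := by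
  have hmem : betaP (edgeUnit 2 le_rfl) m ∈
      {r : ℝ | ∃ n : ℕ, ∃ μ : EdgeMeasure n, mass μ = 1 ∧ r = betaP μ m} :=
    ⟨2, edgeUnit 2 le_rfl, edgeUnit_mass 2 le_rfl, rfl⟩
  have := le_csSup (aux_bddAbove m hm) hmem
  exact le_trans (aux_betaP_nonneg _ m) this

lemma aux_degTuple_le {m n : ℕ} (p : Fin m → Fin n) (hp : Function.Injective p)
    (v : Fin n) : degTuple p v ≤ 2 := by
  rw [degTuple]
  have hsub : (Finset.univ.filter (fun i : Fin (m-1) =>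
      p ⟨i.1, by have := i.2; omega⟩ = v ∨ p ⟨i.1 + 1, by have := i.2; omega⟩ = v))
      ⊆ (Finset.univ.filter (fun i : Fin (m-1) => p ⟨i.1, by have := i.2; omega⟩ = v))
        ∪ (Finset.univ.filter (fun i : Fin (m-1) => p ⟨i.1 + 1, by have := i.2; omega⟩ = v)) := by
    intro i hi
    rw [Finset.mem_filter] at hi
    rcases hi.2 with h | h
    · exact Finset.mem_union_left _ (Finset.mem_filter.mpr ⟨Finset.mem_univ _, h⟩)
    · exact Finset.mem_union_right _ (Finset.mem_filter.mpr ⟨Finset.mem_univ _, h⟩)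
  have hc1 : (Finset.univ.filter (fun i : Fin (m-1) =>
      p ⟨i.1, by have := i.2; omega⟩ = v)).card ≤ 1 := by
    rw [Finset.card_le_one]
    intro a ha b hb
    rw [Finset.mem_filter] at ha hb
    have := hp (ha.2.trans hb.2.symm)
    have hval := congrArg Fin.val this
    simp at hval
    exact Fin.ext hval
  have hc2 : (Finset.univ.filter (fun i : Fin (m-1) =>
      p ⟨i.1 + 1, by have := i.2; omega⟩ = v)).card ≤ 1 := by
    rw [Finset.card_le_one]
    intro a ha b hb
    rw [Finset.mem_filter] at ha hb
    have := hp (ha.2.trans hb.2.symm)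
    have hval := congrArg Fin.val this
    simp at hval
    exact Fin.ext hval
  calc (Finset.univ.filter _).card ≤ _ := Finset.card_le_card hsub
    _ ≤ _ + _ := Finset.card_union_le _ _
    _ ≤ 1 + 1 := add_le_add hc1 hc2

lemma aux_bern (x : ℝ) (h0 : 0 ≤ x) (h1 : x ≤ 1) :
    ∀ k : ℕ, (1 - x) ^ k * (1 + k * x) ≤ 1 := by
  intro k
  induction k with
  | zero => norm_num
  | succ k ih =>
    have hnn : (0:ℝ) ≤ (1 - x) ^ k := pow_nonneg (by linarith) k
    have step : (1 - x) ^ (k+1) * (1 + (k+1 : ℕ) * x)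
        ≤ (1 - x) ^ k * (1 + k * x) := by
      have expand : (1 - x) ^ (k+1) * (1 + (k+1 : ℕ) * x)
          = (1 - x) ^ k * ((1 - x) * (1 + ((k:ℝ)+1) * x)) := by
        push_cast
        ring
      rw [expand]
      apply mul_le_mul_of_nonneg_left _ hnn
      nlinarith [sq_nonneg x]
    exact le_trans step ih

end AuxSup
section AuxMax

/-- `rho` as a function of the raw weight matrix. -/
noncomputable def rhoFun (n m : ℕ) (hm : 0 < m) (W : Fin n → Fin n → ℝ) : ℝ :=
  ∑ x ∈ Finset.univ.filter (fun x : Fin m → Fin n => Function.Injective x),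
    (∑ u, W (x ⟨0, hm⟩) u) *
      (∏ i : Fin (m - 1),
        W (x ⟨i.1, by have := i.2; omega⟩) (x ⟨i.1 + 1, by have := i.2; omega⟩)) *
      (∑ u, W (x ⟨m - 1, by omega⟩) u)

lemma rho_eq_rhoFun {n : ℕ} (μ : EdgeMeasure n) (m : ℕ) (hm : 0 < m) :
    rho μ m = rhoFun n m hm μ.w := by
  rw [rho, dif_pos hm]
  rfl

lemma rhoFun_continuous (n m : ℕ) (hm : 0 < m) : Continuous (rhoFun n m hm) := by
  unfold rhoFun
  apply continuous_finset_sum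
  intro x _
  have happly : ∀ (a b : Fin n), Continuous fun W : Fin n → Fin n → ℝ => W a b :=
    fun a b => (continuous_apply b).comp (continuous_apply a)
  have h1 : Continuous fun W : Fin n → Fin n → ℝ => (∑ u, W (x ⟨0, hm⟩) u) :=
    continuous_finset_sum _ fun u _ => happly _ u
  have h2 : Continuous fun W : Fin n → Fin n → ℝ =>
      (∏ i : Fin (m - 1),
        W (x ⟨i.1, by have := i.2; omega⟩) (x ⟨i.1 + 1, by have := i.2; omega⟩)) :=
    continuous_finset_prod _ fun i _ => happly _ _
  have h3 : Continuous fun W : Fin n → Fin n → ℝ => (∑ u, W (x ⟨m - 1, by omega⟩) u) :=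
    continuous_finset_sum _ fun u _ => happly _ u
  exact (h1.mul h2).mul h3

lemma aux_exists_max (n m : ℕ) (hn : 2 ≤ n) (hm : 0 < m) :
    ∃ μ : EdgeMeasure n, mass μ = 1 ∧
      ∀ ν : EdgeMeasure n, mass ν = 1 → rho ν m ≤ rho μ m := by
  classical
  set K : Set (Fin n → Fin n → ℝ) :=
    {W | (∀ i j, W i j = W j i) ∧ (∀ i, W i i = 0) ∧ (∀ i j, 0 ≤ W i j) ∧
      (∑ i, ∑ j, W i j) = 2} with hK
  have hne : K.Nonempty := by
    refine ⟨(edgeUnit n hn).w, (edgeUnit n hn).symm, (edgeUnit n hn).diag,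
      (edgeUnit n hn).nonneg, ?_⟩
    exact aux_sum_w _ (edgeUnit_mass n hn)
  have hbox : IsCompact (Set.univ.pi fun _ : Fin n =>
      Set.univ.pi fun _ : Fin n => Set.Icc (0:ℝ) 2) :=
    isCompact_univ_pi fun _ => isCompact_univ_pi fun _ => isCompact_Icc
  have hsub : K ⊆ Set.univ.pi fun _ : Fin n =>
      Set.univ.pi fun _ : Fin n => Set.Icc (0:ℝ) 2 := by
    rintro W ⟨hs, hd, hnn, ht⟩
    rw [Set.mem_univ_pi]
    intro i
    rw [Set.mem_univ_pi]
    intro j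
    constructor
    · exact hnn i j
    · have h1 : W i j ≤ ∑ j', W i j' :=
        Finset.single_le_sum (fun j' _ => hnn i j') (Finset.mem_univ j)
      have h2 : (∑ j', W i j') ≤ ∑ i', ∑ j', W i' j' :=
        Finset.single_le_sum (fun i' _ => Finset.sum_nonneg fun j' _ => hnn i' j')
          (Finset.mem_univ i)
      rw [ht] at h2
      linarith
  have happly : ∀ (a b : Fin n), Continuous fun W : Fin n → Fin n → ℝ => W a b :=
    fun a b => (continuous_apply b).comp (continuous_apply a)
  have hclosed : IsClosed K := by
    rw [hK]
    have c1 : IsClosed {W : Fin n → Fin n → ℝ | ∀ i j, W i j = W j i} := by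
      rw [Set.setOf_forall]
      refine isClosed_iInter fun i => ?_
      rw [Set.setOf_forall]
      exact isClosed_iInter fun j => isClosed_eq (happly i j) (happly j i)
    have c2 : IsClosed {W : Fin n → Fin n → ℝ | ∀ i, W i i = 0} := by
      rw [Set.setOf_forall]
      exact isClosed_iInter fun i => isClosed_eq (happly i i) continuous_const
    have c3 : IsClosed {W : Fin n → Fin n → ℝ | ∀ i j, 0 ≤ W i j} := by
      rw [Set.setOf_forall]
      refine isClosed_iInter fun i => ?_
      rw [Set.setOf_forall]
      exact isClosed_iInter fun j => isClosed_le continuous_const (happly i j)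
    have c4 : IsClosed {W : Fin n → Fin n → ℝ | (∑ i, ∑ j, W i j) = 2} :=
      isClosed_eq (continuous_finset_sum _ fun i _ =>
        continuous_finset_sum _ fun j _ => happly i j) continuous_const
    exact (c1.inter (c2.inter (c3.inter c4)) : _)
  have hcpt : IsCompact K := hbox.of_isClosed_subset hclosed hsub
  obtain ⟨W, hWK, hWmax⟩ :=
    hcpt.exists_isMaxOn hne ((rhoFun_continuous n m hm).continuousOn)
  obtain ⟨hs, hd, hnn, ht⟩ := hWK
  refine ⟨⟨W, hs, hd, hnn⟩, ?_, ?_⟩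
  · show (∑ i, ∑ j, W i j) / 2 = 1
    rw [ht]
    norm_num
  · intro ν hν
    rw [rho_eq_rhoFun ν m hm, rho_eq_rhoFun ⟨W, hs, hd, hnn⟩ m hm]
    exact hWmax ⟨ν.symm, ν.diag, ν.nonneg, aux_sum_w ν hν⟩

end AuxMax
section AuxKey

lemma aux_keydeg {n : ℕ} (m : ℕ) (hm : 2 ≤ m) (μ : EdgeMeasure n) (hmass : mass μ = 1)
    (hmax : ∀ ν : EdgeMeasure n, mass ν = 1 → rho ν m ≤ rho μ m)
    (hpos : 0 < rho μ m) (v : Fin n) : mubar μ v ≤ 24 / ((m : ℝ) + 1) := by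
  classical
  have hm' : 0 < m := by omega
  set t : ℝ := 1 / 24 with ht
  set D : ℝ := mubar μ v with hD
  have hD0 : 0 ≤ D := aux_mubar_nonneg μ v
  have hD2 : D ≤ 2 := aux_mubar_le μ hmass v
  set c : ℝ := 1 - t * D with hc
  have hc0 : 0 < c := by rw [hc, ht]; linarith
  have hcinv : 0 ≤ c⁻¹ := inv_nonneg.mpr hc0.le
  have ht0 : (0:ℝ) ≤ 1 - t := by rw [ht]; norm_num
  have ht1 : 1 - t ≤ 1 := by rw [ht]; norm_num
  -- the perturbed measure
  set ν : EdgeMeasure n :=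
    { w := fun i j => μ.w i j * (if i = v ∨ j = v then 1 - t else 1) * c⁻¹
      symm := by
        intro i j
        show μ.w i j * (if i = v ∨ j = v then 1 - t else 1) * c⁻¹
            = μ.w j i * (if j = v ∨ i = v then 1 - t else 1) * c⁻¹
        rw [μ.symm i j]
        exact congrArg (· * c⁻¹) (congrArg (μ.w j i * ·) (if_congr or_comm rfl rfl))
      diag := by
        intro i
        show μ.w i i * (if i = v ∨ i = v then 1 - t else 1) * c⁻¹ = 0
        rw [μ.diag]; ring
      nonneg := by
        intro i j
        show 0 ≤ μ.w i j * (if i = v ∨ j = v then 1 - t else 1) * c⁻¹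
        apply mul_nonneg (mul_nonneg (μ.nonneg i j) _) hcinv
        split
        · exact ht0
        · norm_num } with hν
  -- mass of ν is 1
  have hmassν : mass ν = 1 := by
    rw [mass]
    have hB : (∑ i, ∑ j, (if i = v ∨ j = v then μ.w i j else 0)) = 2 * D := by
      have hrow : ∀ i, (∑ j, if i = v ∨ j = v then μ.w i j else 0)
          = if i = v then D else μ.w i v := by
        intro i
        by_cases hi : i = v
        · subst hi
          simp only [true_or, if_pos]
          rfl
        · simp only [hi, false_or, if_neg hi]
          rw [Finset.sum_ite_eq' Finset.univ v (μ.w i)]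
          simp
      rw [Finset.sum_congr rfl fun i _ => hrow i]
      have hsplit : ∀ i : Fin n, (if i = v then D else μ.w i v)
          = μ.w i v + (if i = v then D else 0) := by
        intro i
        by_cases hi : i = v
        · subst hi; rw [μ.diag]; simp
        · simp [hi]
      rw [Finset.sum_congr rfl fun i _ => hsplit i, Finset.sum_add_distrib]
      rw [Finset.sum_ite_eq' Finset.univ v (fun _ => D)]
      rw [aux_col_eq μ v]
      simp
      ring
    have hterm : ∀ i j, ν.w i j
        = (μ.w i j - t * (if i = v ∨ j = v then μ.w i j else 0)) * c⁻¹ := by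
      intro i j
      show μ.w i j * (if i = v ∨ j = v then 1 - t else 1) * c⁻¹ = _
      split <;> ring
    have hsum : (∑ i, ∑ j, ν.w i j) = (2 - t * (2 * D)) * c⁻¹ := by
      rw [Finset.sum_congr rfl fun i _ => Finset.sum_congr rfl fun j _ => hterm i j]
      have : ∀ i : Fin n, (∑ j, (μ.w i j - t * (if i = v ∨ j = v then μ.w i j else 0)) * c⁻¹)
          = ((∑ j, μ.w i j) - t * (∑ j, if i = v ∨ j = v then μ.w i j else 0)) * c⁻¹ := by
        intro i
        rw [← Finset.sum_mul]
        congr 1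
        rw [Finset.sum_sub_distrib, Finset.mul_sum]
      rw [Finset.sum_congr rfl fun i _ => this i]
      rw [← Finset.sum_mul]
      congr 1
      rw [Finset.sum_sub_distrib]
      rw [aux_sum_w μ hmass]
      congr 1
      rw [← Finset.mul_sum]
      rw [hB]
    rw [hsum]
    have h2c : 2 - t * (2 * D) = 2 * c := by rw [hc]; ring
    rw [h2c, mul_inv_cancel_right₀ hc0.ne']
    norm_num
  -- lower bound for mubar of ν
  have hmub : ∀ u, (1 - t) * c⁻¹ * mubar μ u ≤ mubar ν u := by
    intro u
    have e1 : (1 - t) * c⁻¹ * mubar μ u = ∑ j, μ.w u j * (1 - t) * c⁻¹ := by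
      rw [mubar, Finset.mul_sum]
      exact Finset.sum_congr rfl fun j _ => by ring
    rw [e1]
    apply Finset.sum_le_sum
    intro j _
    show μ.w u j * (1 - t) * c⁻¹ ≤ μ.w u j * (if u = v ∨ j = v then 1 - t else 1) * c⁻¹
    apply mul_le_mul_of_nonneg_right _ hcinv
    apply mul_le_mul_of_nonneg_left _ (μ.nonneg u j)
    split
    · exact le_rfl
    · exact ht1
  -- lower bound for pathWt of ν
  have hpwt : ∀ x : Fin m → Fin n, Function.Injective x →
      (1 - t) ^ 2 * (c⁻¹) ^ (m - 1) * pathWt μ x ≤ pathWt ν x := by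
    intro x hx
    have heq : pathWt ν x
        = pathWt μ x * (1 - t) ^ (degTuple x v) * (c⁻¹) ^ (m - 1) := by
      show (∏ i : Fin (m - 1),
          μ.w (x ⟨i.1, by have := i.2; omega⟩) (x ⟨i.1 + 1, by have := i.2; omega⟩) *
            (if x ⟨i.1, by have := i.2; omega⟩ = v ∨ x ⟨i.1 + 1, by have := i.2; omega⟩ = v
              then 1 - t else 1) * c⁻¹) = _
      rw [Finset.prod_mul_distrib, Finset.prod_mul_distrib]
      rw [Finset.prod_const, Finset.card_univ, Fintype.card_fin]
      congr 1
      congr 1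
      rw [Finset.prod_ite, Finset.prod_const, Finset.prod_const_one, mul_one]
      rfl
    rw [heq]
    have hdeg : (1 - t) ^ 2 ≤ (1 - t) ^ (degTuple x v) :=
      pow_le_pow_of_le_one ht0 ht1 (aux_degTuple_le x hx v)
    have h1 : (1 - t) ^ 2 * (c⁻¹) ^ (m - 1) * pathWt μ x
        = pathWt μ x * (1 - t) ^ 2 * (c⁻¹) ^ (m - 1) := by ring
    rw [h1]
    apply mul_le_mul_of_nonneg_right _ (pow_nonneg hcinv _)
    exact mul_le_mul_of_nonneg_left hdeg (aux_pathWt_nonneg μ x)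
  -- main comparison
  set Kc : ℝ := (1 - t) ^ 4 * (c⁻¹) ^ (m + 1) with hKc
  have hKc0 : 0 ≤ Kc := mul_nonneg (pow_nonneg ht0 _) (pow_nonneg hcinv _)
  have hlow : Kc * rho μ m ≤ rho ν m := by
    rw [rho, dif_pos hm', rho, dif_pos hm', Finset.mul_sum]
    apply Finset.sum_le_sum
    intro x hxmem
    have hx : Function.Injective x := (Finset.mem_filter.mp hxmem).2
    have e1 : Kc * (mubar μ (x ⟨0, hm'⟩) * pathWt μ x * mubar μ (x ⟨m - 1, by omega⟩))
        = ((1 - t) * c⁻¹ * mubar μ (x ⟨0, hm'⟩)) *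
          ((1 - t) ^ 2 * (c⁻¹) ^ (m - 1) * pathWt μ x) *
          ((1 - t) * c⁻¹ * mubar μ (x ⟨m - 1, by omega⟩)) := by
      rw [hKc]
      have hex : m + 1 = (m - 1) + 2 := by omega
      rw [hex, pow_add]
      ring
    rw [e1]
    have ha1 : 0 ≤ (1 - t) * c⁻¹ * mubar μ (x ⟨0, hm'⟩) :=
      mul_nonneg (mul_nonneg ht0 hcinv) (aux_mubar_nonneg μ _)
    have ha2 : 0 ≤ (1 - t) ^ 2 * (c⁻¹) ^ (m - 1) * pathWt μ x :=
      mul_nonneg (mul_nonneg (pow_nonneg ht0 _) (pow_nonneg hcinv _))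
        (aux_pathWt_nonneg μ x)
    have ha3 : 0 ≤ (1 - t) * c⁻¹ * mubar μ (x ⟨m - 1, by omega⟩) :=
      mul_nonneg (mul_nonneg ht0 hcinv) (aux_mubar_nonneg μ _)
    have hb1 : 0 ≤ mubar ν (x ⟨0, hm'⟩) := aux_mubar_nonneg ν _
    have hb12 : 0 ≤ mubar ν (x ⟨0, hm'⟩) * pathWt ν x :=
      mul_nonneg hb1 (aux_pathWt_nonneg ν x)
    have step1 : ((1 - t) * c⁻¹ * mubar μ (x ⟨0, hm'⟩)) *
        ((1 - t) ^ 2 * (c⁻¹) ^ (m - 1) * pathWt μ x)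
        ≤ mubar ν (x ⟨0, hm'⟩) * pathWt ν x :=
      mul_le_mul (hmub _) (hpwt x hx) ha2 hb1
    exact mul_le_mul step1 (hmub _) ha3 hb12
  -- conclude (1-t)^4 ≤ c^(m+1)
  have hKle : Kc ≤ 1 := by
    have h1 : Kc * rho μ m ≤ 1 * rho μ m := by
      rw [one_mul]
      exact le_trans hlow (hmax ν hmassν)
    exact le_of_mul_le_mul_right h1 hpos
  have hpow : (1 - t) ^ 4 ≤ c ^ (m + 1) := by
    have h2 : (0:ℝ) < c ^ (m + 1) := pow_pos hc0 _
    have h3 : Kc = (1 - t) ^ 4 / c ^ (m + 1) := by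
      rw [hKc, inv_pow, div_eq_mul_inv]
    rw [h3, div_le_one h2] at hKle
    exact hKle
  -- final contradiction argument
  by_contra hcon
  push_neg at hcon
  have hm1 : (0:ℝ) < (m : ℝ) + 1 := by positivity
  have h24 : 24 < D * ((m : ℝ) + 1) := by
    rw [div_lt_iff₀ hm1] at hcon
    linarith
  have htD0 : 0 ≤ t * D := by rw [ht]; linarith
  have htD1 : t * D ≤ 1 := by rw [ht]; linarith
  have hbern := aux_bern (t * D) htD0 htD1 (m + 1)
  have hcast : ((m + 1 : ℕ) : ℝ) = (m : ℝ) + 1 := by push_cast; ring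
  rw [hcast] at hbern
  have hC : 2 ≤ 1 + ((m : ℝ) + 1) * (t * D) := by
    have : 1 < ((m : ℝ) + 1) * (t * D) := by rw [ht]; nlinarith
    linarith
  have hchain : (1 - t) ^ 4 * 2 ≤ 1 := by
    calc (1 - t) ^ 4 * 2 ≤ (1 - t) ^ 4 * (1 + ((m : ℝ) + 1) * (t * D)) :=
          mul_le_mul_of_nonneg_left hC (pow_nonneg ht0 _)
      _ ≤ c ^ (m + 1) * (1 + ((m : ℝ) + 1) * (t * D)) := by
          apply mul_le_mul_of_nonneg_right hpow
          linarith
      _ = (1 - t * D) ^ (m + 1) * (1 + ((m : ℝ) + 1) * (t * D)) := by rw [hc]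
      _ ≤ 1 := hbern
  rw [ht] at hchain
  norm_num at hchain

end AuxKey
/-- Lemma 3.2: for all `n ≥ m ≥ 2`, `ρ_n(m) ≤ (1152/m²)·β(P_m)`. -/
theorem stmt14 (n m : ℕ) (hm : 2 ≤ m) (hmn : m ≤ n) :
    rhoN n m ≤ 1152 / (m : ℝ) ^ 2 * betaPathSup m := by
  classical
  have hn : 2 ≤ n := le_trans hm hmn
  have hm' : 0 < m := by omega
  have hB0 : 0 ≤ betaPathSup m := aux_betaPathSup_nonneg m hm
  have hm0 : (0:ℝ) < (m : ℝ) := by positivity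
  have hRHS : 0 ≤ 1152 / (m : ℝ) ^ 2 * betaPathSup m := by
    apply mul_nonneg _ hB0
    positivity
  rw [rhoN]
  apply Real.sSup_le _ hRHS
  rintro r ⟨μ₀, hμ₀, rfl⟩
  obtain ⟨μs, hμs, hmaxs⟩ := aux_exists_max n m hn hm'
  have h1 : rho μ₀ m ≤ rho μs m := hmaxs μ₀ hμ₀
  by_cases hpos : 0 < rho μs m
  · have hdeg : ∀ v, mubar μs v ≤ 24 / ((m : ℝ) + 1) :=
      fun v => aux_keydeg m hm μs hμs hmaxs hpos v
    have h24 : (0:ℝ) ≤ 24 / ((m : ℝ) + 1) := by positivity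
    have h2 : rho μs m ≤ (24 / ((m : ℝ) + 1)) ^ 2 *
        (∑ x ∈ Finset.univ.filter (fun x : Fin m → Fin n => Function.Injective x),
          pathWt μs x) := by
      rw [rho, dif_pos hm', Finset.mul_sum]
      apply Finset.sum_le_sum
      intro x _
      have hq := aux_pathWt_nonneg μs x
      have e : (24 / ((m : ℝ) + 1)) ^ 2 * pathWt μs x
          = (24 / ((m : ℝ) + 1)) * pathWt μs x * (24 / ((m : ℝ) + 1)) := by ring
      rw [e]
      have s1 : mubar μs (x ⟨0, hm'⟩) * pathWt μs x
          ≤ (24 / ((m : ℝ) + 1)) * pathWt μs x :=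
        mul_le_mul_of_nonneg_right (hdeg _) hq
      exact mul_le_mul s1 (hdeg _) (aux_mubar_nonneg μs _) (mul_nonneg h24 hq)
    have h3 : (∑ x ∈ Finset.univ.filter
          (fun x : Fin m → Fin n => Function.Injective x), pathWt μs x)
        = 2 * betaP μs m := by
      rw [betaP]
      ring
    have h4 : betaP μs m ≤ betaPathSup m :=
      le_csSup (aux_bddAbove m hm) ⟨n, μs, hμs, rfl⟩
    have hcoef : (0:ℝ) ≤ (24 / ((m : ℝ) + 1)) ^ 2 * 2 := by positivity
    calc rho μ₀ m ≤ rho μs m := h1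
      _ ≤ (24 / ((m : ℝ) + 1)) ^ 2 * (2 * betaP μs m) := by rw [← h3]; exact h2
      _ = ((24 / ((m : ℝ) + 1)) ^ 2 * 2) * betaP μs m := by ring
      _ ≤ ((24 / ((m : ℝ) + 1)) ^ 2 * 2) * betaPathSup m :=
          mul_le_mul_of_nonneg_left h4 hcoef
      _ = 1152 / ((m : ℝ) + 1) ^ 2 * betaPathSup m := by
          have hne : ((m : ℝ) + 1) ≠ 0 := by positivity
          field_simp
          ring_nf
          try tauto
      _ ≤ 1152 / (m : ℝ) ^ 2 * betaPathSup m := by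
          apply mul_le_mul_of_nonneg_right _ hB0
          apply div_le_div_of_nonneg_left (by norm_num) (by positivity)
          nlinarith
  · push_neg at hpos
    calc rho μ₀ m ≤ rho μs m := h1
      _ ≤ 0 := hpos
      _ ≤ 1152 / (m : ℝ) ^ 2 * betaPathSup m := hRHS
end
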